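/- For 0 < α ≤ 1 define the Pick function p_α(z) = 4αz / (1 − z + √((1 − z)² + 4αz))², where the square root denotes the holomorphic branch on the unit disk U of √((1 − z)² + 4αz) taking the value 1 at z = 0 (such a branch exists since (1 − z)² + 4αz has no zeros in U). Then p_α is holomorphic and injective on U, p_α(U) ⊆ U, p_α(0) = 0, p_α'(0) = α, and for 0 < α < 1 the image p_α(U) equals U minus the radial slit (−1, −α/(1 + √(1 − α))²] on the negative real axis. -/

import Mathlib

open Complex Set Filter Finset

noncomputable section

/-- The open unit disk in the complex plane. -/
def unitDisk : Set ℂ := {z : ℂ | ‖z‖ < 1}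

/-- A Stolz angle at a boundary point `ζ` with opening parameter `k > 1`. -/
def stolzAngle (ζ : ℂ) (k : ℝ) : Set ℂ :=
  {z | z ∈ unitDisk ∧ ‖z - ζ‖ < k * (1 - ‖z‖)}

/-- `φ` has angular limit `L` at the boundary point `ζ`: `φ z → L` as `z → ζ`
within every Stolz angle at `ζ`. -/
def HasAngularLimit (φ : ℂ → ℂ) (ζ L : ℂ) : Prop :=
  ∀ k : ℝ, 1 < k → Tendsto φ (nhdsWithin ζ (stolzAngle ζ k)) (nhds L)

/-- `φ` has finite angular limit `L` and finite angular derivative `β` at the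
boundary point `ζ`. -/
def HasAngularDerivAt (φ : ℂ → ℂ) (ζ L β : ℂ) : Prop :=
  HasAngularLimit φ ζ L ∧
  ∀ k : ℝ, 1 < k →
    Tendsto (fun z => (φ z - L) / (z - ζ)) (nhdsWithin ζ (stolzAngle ζ k)) (nhds β)

/-! The Koebe function `k(z) = z / (1 - z)²` maps `U` bijectively onto `ℂ` minus the slit
`(-∞, -1/4]`, and maps the unit circle into that slit. Squaring out the definition of `p = p_α`
gives `k(p(z)) = α k(z)` on `U`. Hence `p` is injective. If `|p(z)| = 1` then `α k(z)` would lie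
in the slit, hence so would `k(z)` (as `α ≤ 1`), which is impossible; so `|p| ≠ 1` on `U`, and
`p(0) = 0` together with connectedness gives `p(U) ⊆ U`. Finally `p(U) = U ∩ k⁻¹(α k(U))`, and
since `k` increases on `(-1, 1)` with `k(-α / (1 + √(1 - α))²) = -α/4`, this is `U` minus the
real segment on which `k ≤ -α/4`. -/

open ComplexConjugate

def koebe {K : Type*} [Field K] (z : K) : K := z / (1 - z) ^ 2

lemma map_koebe {K L : Type*} [Field K] [Field L] (f : K →+* L) (z : K) :
    f (koebe z) = koebe (f z) := by
  simp [koebe]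

lemma koebe_sub_koebe {K : Type*} [Field K] {z w : K} (hz : 1 - z ≠ 0) (hw : 1 - w ≠ 0) :
    koebe z - koebe w = (z - w) * (1 - z * w) / ((1 - z) ^ 2 * (1 - w) ^ 2) := by
  simp only [koebe]
  field_simp
  ring

lemma koebe_strictMonoOn : StrictMonoOn (koebe : ℝ → ℝ) (Set.Ioo (-1) 1) := by
  rintro x ⟨hx₁, hx₂⟩ y ⟨hy₁, hy₂⟩ hxy
  have hxy' : 0 < koebe y - koebe x := by
    rw [koebe_sub_koebe (by linarith) (by linarith)]
    have : 0 < 1 - y * x := by nlinarith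
    have : 0 < (1 - y) ^ 2 * (1 - x) ^ 2 := by positivity
    have : 0 < y - x := by linarith
    positivity
  linarith

lemma neg_quarter_lt_koebe {x : ℝ} (hx : x ∈ Set.Ioo (-1) 1) : -(1 / 4) < koebe x := by
  obtain ⟨hx₁, hx₂⟩ := hx
  have : koebe x + 1 / 4 = (1 + x) ^ 2 / (4 * (1 - x) ^ 2) := by
    simp only [koebe]
    field_simp [show 1 - x ≠ 0 by linarith]
    ring
  have : 0 < (1 + x) ^ 2 / (4 * (1 - x) ^ 2) := by
    have : 0 < 1 - x := by linarith
    have : 0 < 1 + x := by linarith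
    positivity
  linarith

lemma koebe_slit_endpoint {α : ℝ} (hα1 : α ≤ 1) :
    koebe (-α / (1 + √(1 - α)) ^ 2) = -(α / 4) := by
  have hr := Real.sq_sqrt (sub_nonneg.mpr hα1)
  have hsum : (1 + √(1 - α)) ^ 2 + α = 2 * (1 + √(1 - α)) := by linear_combination hr
  rw [koebe, one_sub_div (by positivity), div_pow, sub_neg_eq_add, hsum]
  field_simp
  ring

lemma unitDisk_eq_ball : unitDisk = Metric.ball 0 1 := by
  ext z
  simp [unitDisk]

lemma zero_mem_unitDisk : (0 : ℂ) ∈ unitDisk := by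
  simp [unitDisk]

lemma isPreconnected_unitDisk : IsPreconnected unitDisk := by
  rw [unitDisk_eq_ball]
  exact (convex_ball 0 1).isPreconnected

lemma one_sub_ne_zero_of_mem_unitDisk {z : ℂ} (hz : z ∈ unitDisk) : 1 - z ≠ 0 := by
  rintro h
  rw [unitDisk, mem_ofPred_eq, ← sub_eq_zero.mp h, norm_one] at hz
  exact lt_irrefl 1 hz

lemma koebe_injOn : InjOn koebe unitDisk := by
  intro z hz w hw h
  have hz1 := one_sub_ne_zero_of_mem_unitDisk hz
  have hw1 := one_sub_ne_zero_of_mem_unitDisk hw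
  have hzw : z * w ≠ 1 := fun h1 => by
    have := mul_lt_one_of_nonneg_of_lt_one_left (norm_nonneg z) hz hw.le
    rw [← norm_mul, h1, norm_one] at this
    exact lt_irrefl 1 this
  have h0 := sub_eq_zero.mpr h
  rw [koebe_sub_koebe hz1 hw1, div_eq_zero_iff, mul_eq_zero, sub_eq_zero, sub_eq_zero] at h0
  rcases h0 with (h1 | h1) | h1
  · exact h1
  · exact absurd h1.symm hzw
  · simp [hz1, hw1] at h1

lemma exists_eq_ofReal_of_koebe_eq_ofReal {z : ℂ} {t : ℝ} (hz : z ∈ unitDisk)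
    (h : koebe z = t) : ∃ x ∈ Set.Ioo (-1 : ℝ) 1, z = x := by
  have hconj : conj z = z := by
    refine koebe_injOn ?_ hz ?_
    · simpa [unitDisk] using hz
    · rw [← map_koebe, h, conj_ofReal]
  refine ⟨z.re, ?_, (conj_eq_iff_re.mp hconj).symm⟩
  rw [← conj_eq_iff_re.mp hconj, unitDisk, mem_ofPred_eq, norm_real, Real.norm_eq_abs] at hz
  exact abs_lt.mp hz

def koebeSlit : Set ℂ := ofReal '' Set.Iic (-(1 / 4))

lemma koebe_notMem_koebeSlit {z : ℂ} (hz : z ∈ unitDisk) : koebe z ∉ koebeSlit := by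
  rintro ⟨t, ht, h⟩
  obtain ⟨x, hx, rfl⟩ := exists_eq_ofReal_of_koebe_eq_ofReal hz h.symm
  have := neg_quarter_lt_koebe hx
  have : koebe x = t := ofReal_injective ((map_koebe ofRealHom x).trans h.symm)
  linarith [Set.mem_Iic.mp ht]

lemma koebe_eq_of_norm_eq_one {w : ℂ} (hw : ‖w‖ = 1) : koebe w = ((2 * w.re - 2)⁻¹ : ℝ) := by
  have hconj : w * conj w = 1 := by
    rw [mul_conj, normSq_eq_norm_sq, hw]; norm_num
  have hsq : (1 - w) ^ 2 * conj w = 2 * w.re - 2 := by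
    have := add_conj w
    push_cast at this
    linear_combination (w - 2) * hconj + this
  push_cast
  rw [← hsq, koebe, mul_inv, ← div_eq_mul_inv, eq_div_iff (right_ne_zero_of_mul_eq_one hconj),
    div_mul_eq_mul_div, hconj]
  field_simp

lemma koebe_mem_koebeSlit_of_norm_eq_one {w : ℂ} (hw : ‖w‖ = 1) (hw1 : w ≠ 1) :
    koebe w ∈ koebeSlit := by
  refine ⟨_, ?_, (koebe_eq_of_norm_eq_one hw).symm⟩
  have h1 : w.re < 1 := by
    refine (re_le_norm w).trans_eq hw |>.lt_of_ne fun h => hw1 ?_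
    exact Complex.ext h (abs_re_eq_norm.mp (by rw [h, hw, abs_one]))
  have h2 : -1 ≤ w.re := by linarith [neg_abs_le w.re, abs_re_le_norm w]
  rw [Set.mem_Iic, inv_le_of_neg (by linarith) (by norm_num)]
  linarith

lemma re_sqrt_pos {c : ℂ} (hc : c ∈ slitPlane) : 0 < (Complex.sqrt c).re := by
  rw [Complex.sqrt, cpow_inv_two_re, Real.sqrt_pos]
  rcases hc with hre | him
  · linarith [re_le_norm c]
  · linarith [neg_abs_le c.re, abs_re_lt_norm.mpr him]

lemma add_one_ne_zero_of_re_pos {q : ℂ} (hq : 0 < q.re) : q + 1 ≠ 0 :=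
  ne_of_apply_ne re (show (0 : ℝ) < (q + 1).re by simp; linarith).ne'

lemma sub_one_div_add_one_mem_unitDisk {q : ℂ} (hq : 0 < q.re) :
    (q - 1) / (q + 1) ∈ unitDisk := by
  have hq1 : 0 < ‖q + 1‖ := norm_pos_iff.mpr (add_one_ne_zero_of_re_pos hq)
  rw [unitDisk, mem_ofPred_eq, norm_div, div_lt_one hq1, ← sq_lt_sq₀ (norm_nonneg _) hq1.le,
    Complex.sq_norm, Complex.sq_norm, normSq_apply, normSq_apply]
  simp only [sub_re, add_re, sub_im, add_im, one_re, one_im]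
  nlinarith

lemma koebe_sub_one_div_add_one {q : ℂ} (hq : q + 1 ≠ 0) :
    koebe ((q - 1) / (q + 1)) = (q ^ 2 - 1) / 4 := by
  simp only [koebe]
  field_simp
  ring

lemma exists_koebe_eq_of_notMem_koebeSlit {τ : ℂ} (hτ : τ ∉ koebeSlit) :
    ∃ z ∈ unitDisk, koebe z = τ := by
  have hc : 4 * τ + 1 ∈ slitPlane := by
    rw [mem_slitPlane_iff]
    by_contra! h
    simp only [add_re, mul_re, add_im, mul_im, one_re, one_im] at h
    norm_num at h
    exact hτ ⟨τ.re, by rw [Set.mem_Iic]; linarith, Complex.ext (by simp) (by simp [h.2])⟩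
  set q := Complex.sqrt (4 * τ + 1)
  have hq : 0 < q.re := re_sqrt_pos hc
  have hq1 : q + 1 ≠ 0 := add_one_ne_zero_of_re_pos hq
  have hq2 : q ^ 2 = 4 * τ + 1 := cpow_ofNat_inv_pow _ 2
  refine ⟨(q - 1) / (q + 1), sub_one_div_add_one_mem_unitDisk hq, ?_⟩
  rw [koebe_sub_one_div_add_one hq1, hq2]
  ring

section KoebeRelation

variable {f : ℂ → ℂ} {α : ℝ}

lemma injOn_of_koebe_eq_mul (hα : α ≠ 0) (hf : ∀ z ∈ unitDisk, koebe (f z) = α * koebe z) :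
    InjOn f unitDisk := by
  intro z hz w hw h
  refine koebe_injOn hz hw (mul_left_cancel₀ (ofReal_ne_zero.mpr hα) ?_)
  rw [← hf z hz, ← hf w hw, h]

lemma mapsTo_of_koebe_eq_mul (hα0 : 0 < α) (hα1 : α ≤ 1)
    (hf : ∀ z ∈ unitDisk, koebe (f z) = α * koebe z) (hcont : ContinuousOn f unitDisk)
    (hf0 : f 0 = 0) : MapsTo f unitDisk unitDisk := by
  have hne : ∀ z ∈ unitDisk, ‖f z‖ ≠ 1 := by
    intro z hz h
    have hz1 : f z ≠ 1 := by
      rintro h1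
      -- `koebe 1 = 0` as a junk value, so the relation forces `z = 0`
      have : koebe z = koebe 0 := by
        simpa [h1, koebe, hα0.ne'] using (hf z hz).symm
      rw [koebe_injOn hz zero_mem_unitDisk this, hf0] at h1
      exact zero_ne_one h1
    obtain ⟨t, ht, hkt⟩ := koebe_mem_koebeSlit_of_norm_eq_one h hz1
    refine koebe_notMem_koebeSlit hz ⟨t / α, ?_, ?_⟩
    · rw [Set.mem_Iic] at ht ⊢
      rw [div_le_iff₀ hα0]
      nlinarith
    · rw [ofReal_div, hkt, hf z hz]
      field_simp [ofReal_ne_zero.mpr hα0.ne']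
  intro z hz
  by_contra h
  obtain ⟨y, hy, hy1⟩ := isPreconnected_unitDisk.intermediate_value zero_mem_unitDisk hz
    (continuous_norm.comp_continuousOn hcont) ⟨by simp [hf0], not_lt.mp h⟩
  exact hne y hy hy1

lemma image_eq_of_koebe_eq_mul (hα0 : 0 < α) (hα1 : α < 1)
    (hf : ∀ z ∈ unitDisk, koebe (f z) = α * koebe z) (hmaps : MapsTo f unitDisk unitDisk) :
    f '' unitDisk = unitDisk \ ofReal '' Set.Ioc (-1) (-α / (1 + √(1 - α)) ^ 2) := by
  set c := -α / (1 + √(1 - α)) ^ 2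
  have hc : c ∈ Set.Ioo (-1) 1 := by
    have hr := Real.sq_sqrt (sub_nonneg.mpr hα1.le)
    have hr0 : 0 < √(1 - α) := Real.sqrt_pos.mpr (by linarith)
    constructor
    · rw [lt_div_iff₀ (by positivity)]
      nlinarith
    · exact (div_neg_of_neg_of_pos (by linarith) (by positivity)).trans one_pos
  have hle_iff : ∀ x ∈ Set.Ioo (-1 : ℝ) 1, x ≤ c ↔ koebe x ≤ -(α / 4) := fun x hx => by
    rw [← koebe_slit_endpoint hα1.le, koebe_strictMonoOn.le_iff_le hx hc]
  have hα : (α : ℂ) ≠ 0 := ofReal_ne_zero.mpr hα0.ne'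
  ext w
  constructor
  · rintro ⟨z, hz, rfl⟩
    refine ⟨hmaps hz, ?_⟩
    rintro ⟨x, ⟨hx1, hx2⟩, hxz⟩
    have hx : x ∈ Set.Ioo (-1 : ℝ) 1 := ⟨hx1, hx2.trans_lt hc.2⟩
    refine koebe_notMem_koebeSlit hz ⟨koebe x / α, ?_, ?_⟩
    · rw [Set.mem_Iic, div_le_iff₀ hα0]
      linarith [(hle_iff x hx).mp hx2]
    · rw [ofReal_div, div_eq_iff hα, mul_comm, ← hf z hz, ← hxz]
      exact map_koebe ofRealHom x
  · rintro ⟨hw, hslit⟩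
    have hτ : koebe w / α ∉ koebeSlit := by
      rintro ⟨t, ht, htw⟩
      have : koebe w = (α * t : ℝ) := by
        rw [ofReal_mul, htw, mul_div_cancel₀ _ hα]
      obtain ⟨x, hx, rfl⟩ := exists_eq_ofReal_of_koebe_eq_ofReal hw this
      refine hslit ⟨x, ⟨hx.1, (hle_iff x hx).mpr ?_⟩, rfl⟩
      have : koebe x = α * t := ofReal_injective ((map_koebe ofRealHom x).trans this)
      rw [Set.mem_Iic] at ht
      nlinarith
    obtain ⟨z, hz, hkz⟩ := exists_koebe_eq_of_notMem_koebeSlit hτ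
    refine ⟨z, hz, koebe_injOn (hmaps hz) hw ?_⟩
    rw [hf z hz, hkz, mul_div_cancel₀ _ hα]

end KoebeRelation

lemma one_sub_mul_mem_slitPlane {a z : ℂ} (ha : ‖a‖ ≤ 1) (hz : z ∈ unitDisk) :
    1 - a * z ∈ slitPlane := by
  have : ‖a * z‖ < 1 := by
    rw [norm_mul]
    exact mul_lt_one_of_nonneg_of_lt_one_right ha (norm_nonneg z) hz
  left
  rw [sub_re, one_re]
  linarith [re_le_norm (a * z)]

lemma exists_sqrt_one_sub_mul_mul_one_sub_mul {a b : ℂ} (ha : ‖a‖ ≤ 1) (hb : ‖b‖ ≤ 1) :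
    ∃ s : ℂ → ℂ, DifferentiableOn ℂ s unitDisk ∧ s 0 = 1 ∧
      ∀ z ∈ unitDisk, s z ^ 2 = (1 - a * z) * (1 - b * z) := by
  refine ⟨fun z => Complex.sqrt (1 - a * z) * Complex.sqrt (1 - b * z), ?_, by simp, ?_⟩
  · exact (differentiableOn_sqrt.comp (by fun_prop) fun z => one_sub_mul_mem_slitPlane ha).mul
      (differentiableOn_sqrt.comp (by fun_prop) fun z => one_sub_mul_mem_slitPlane hb)
  · intro z _
    simp only [mul_pow, Complex.sqrt, cpow_ofNat_inv_pow]

lemma exists_pick_branch {α : ℝ} (hα0 : 0 ≤ α) (hα1 : α ≤ 1) :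
    ∃ s : ℂ → ℂ, DifferentiableOn ℂ s unitDisk ∧ s 0 = 1 ∧
      ∀ z ∈ unitDisk, s z ^ 2 = (1 - z) ^ 2 + 4 * (α : ℂ) * z := by
  -- `(1 - z)² + 4αz = (1 - a z)(1 - conj a z)` with `|a| = 1`
  set a : ℂ := ⟨1 - 2 * α, 2 * √(α * (1 - α))⟩
  have hnormSq : normSq a = 1 := by
    rw [normSq_mk, ← sq, ← sq, mul_pow, Real.sq_sqrt (mul_nonneg hα0 (sub_nonneg.mpr hα1))]
    ring
  have ha : ‖a‖ = 1 := by rw [norm_def, hnormSq, Real.sqrt_one]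
  obtain ⟨s, hs, hs0, hs2⟩ :=
    exists_sqrt_one_sub_mul_mul_one_sub_mul ha.le ((norm_conj a).trans ha).le
  refine ⟨s, hs, hs0, fun z hz => ?_⟩
  have hsum := add_conj a
  have hprod := mul_conj a
  rw [hnormSq] at hprod
  simp only [a] at hsum
  rw [hs2 z hz]
  push_cast at hsum hprod
  linear_combination z ^ 2 * hprod - z * hsum

def pick (α : ℝ) (s : ℂ → ℂ) (z : ℂ) : ℂ := 4 * α * z / (1 - z + s z) ^ 2

section Pick

variable {α : ℝ} {s : ℂ → ℂ}

lemma pick_zero : pick α s 0 = 0 := by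
  simp [pick]

lemma one_sub_add_ne_zero (hα : α ≠ 0) (hs0 : s 0 = 1)
    (hs2 : ∀ z ∈ unitDisk, s z ^ 2 = (1 - z) ^ 2 + 4 * (α : ℂ) * z) {z : ℂ}
    (hz : z ∈ unitDisk) : 1 - z + s z ≠ 0 := by
  intro h
  have hz0 : 4 * (α : ℂ) * z = 0 := by
    linear_combination -(hs2 z hz) + (s z - (1 - z)) * h
  obtain rfl : z = 0 := by simpa [hα] using hz0
  norm_num [hs0] at h

lemma koebe_pick (hα : α ≠ 0) (hs0 : s 0 = 1)
    (hs2 : ∀ z ∈ unitDisk, s z ^ 2 = (1 - z) ^ 2 + 4 * (α : ℂ) * z) {z : ℂ}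
    (hz : z ∈ unitDisk) : koebe (pick α s z) = α * koebe z := by
  have hD := one_sub_add_ne_zero hα hs0 hs2 hz
  have hz1 := one_sub_ne_zero_of_mem_unitDisk hz
  have h1 : 1 - pick α s z = 2 * (1 - z) / (1 - z + s z) := by
    rw [pick]
    field_simp
    linear_combination hs2 z hz
  rw [koebe, h1, pick, koebe]
  field_simp
  ring

lemma differentiableOn_pick (hα : α ≠ 0) (hs : DifferentiableOn ℂ s unitDisk) (hs0 : s 0 = 1)
    (hs2 : ∀ z ∈ unitDisk, s z ^ 2 = (1 - z) ^ 2 + 4 * (α : ℂ) * z) :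
    DifferentiableOn ℂ (pick α s) unitDisk :=
  DifferentiableOn.div (by fun_prop) (by fun_prop) fun z hz =>
    pow_ne_zero 2 (one_sub_add_ne_zero hα hs0 hs2 hz)

lemma hasDerivAt_pick_zero (hs : DifferentiableAt ℂ s 0) (hs0 : s 0 = 1) :
    HasDerivAt (pick α s) α 0 := by
  have hg : DifferentiableAt ℂ (fun z => 4 * (α : ℂ) / (1 - z + s z) ^ 2) 0 :=
    (differentiableAt_const _).div (by fun_prop) (by norm_num [hs0])
  have hpick : pick α s = fun z => z * (4 * (α : ℂ) / (1 - z + s z) ^ 2) := by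
    ext z
    rw [pick]
    ring
  rw [hpick]
  exact ((hasDerivAt_id' 0).fun_mul hg.hasDerivAt).congr_deriv (by norm_num [hs0])

end Pick

/-- **The Pick function.** For `0 < α ≤ 1` there exists a holomorphic branch `s`
on `U` of `√((1 − z)² + 4αz)` with `s 0 = 1`, and for any such branch the Pick
function `p_α(z) = 4αz/(1 − z + s z)²` is holomorphic and injective on `U`,
maps `U` into `U`, satisfies `p_α(0) = 0`, `p_α'(0) = α`, and for `α < 1` maps
`U` onto `U` minus the radial slit `(−1, −α/(1 + √(1 − α))²]`. -/
theorem pick_function_properties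
    (α : ℝ) (hα0 : 0 < α) (hα1 : α ≤ 1) :
    (∃ s : ℂ → ℂ, DifferentiableOn ℂ s unitDisk ∧ s 0 = 1 ∧
        ∀ z ∈ unitDisk, (s z) ^ 2 = (1 - z) ^ 2 + 4 * (α : ℂ) * z) ∧
    (∀ s : ℂ → ℂ, DifferentiableOn ℂ s unitDisk → s 0 = 1 →
      (∀ z ∈ unitDisk, (s z) ^ 2 = (1 - z) ^ 2 + 4 * (α : ℂ) * z) →
      ∀ p : ℂ → ℂ, (∀ z, p z = 4 * (α : ℂ) * z / (1 - z + s z) ^ 2) →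
        DifferentiableOn ℂ p unitDisk ∧
        InjOn p unitDisk ∧
        MapsTo p unitDisk unitDisk ∧
        p 0 = 0 ∧
        deriv p 0 = (α : ℂ) ∧
        (α < 1 →
          p '' unitDisk =
            unitDisk \
              (Complex.ofReal ''
                Set.Ioc (-1 : ℝ) (-α / (1 + Real.sqrt (1 - α)) ^ 2)))) := by
  refine ⟨exists_pick_branch hα0.le hα1, fun s hs hs0 hs2 p hp => ?_⟩
  obtain rfl : p = pick α s := funext hp
  have hkoebe z (hz : z ∈ unitDisk) := koebe_pick hα0.ne' hs0 hs2 hz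
  have hdiff := differentiableOn_pick hα0.ne' hs hs0 hs2
  have hmaps := mapsTo_of_koebe_eq_mul hα0 hα1 hkoebe hdiff.continuousOn pick_zero
  have hs0' : DifferentiableAt ℂ s 0 :=
    hs.differentiableAt ((unitDisk_eq_ball ▸ Metric.isOpen_ball).mem_nhds zero_mem_unitDisk)
  exact ⟨hdiff, injOn_of_koebe_eq_mul hα0.ne' hkoebe, hmaps, pick_zero,
    (hasDerivAt_pick_zero hs0' hs0).deriv, fun hα1' => image_eq_of_koebe_eq_mul hα0 hα1' hkoebe hmaps⟩
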